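/- Let G be a graph on n ≥ 10 vertices such that for every pair of vertices u, v, there exist at least q·n² pairwise edge-disjoint paths of length at least 1 from N(u) to N(v). Then G is (q/10)-cut-dense. -/

import Mathlib

/-!
Fix a cut `(A, Aᶜ)` with `e` crossing edges, and pick `u ∈ A` with the fewest neighbours `d_u`
in `Aᶜ` and `v ∈ Aᶜ` with the fewest neighbours `d_v` in `A`, so that `|A| d_u ≤ e` and
`|Aᶜ| d_v ≤ e`. A path from `N(u)` to `N(v)` either crosses the cut, or starts in `N(u) ∩ Aᶜ`, or
ends in `N(v) ∩ A`; charging it to a crossing edge or to its first or last edge, edge-disjointness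
bounds the number of paths by `e + (d_u + d_v) n`. Hence `q n² ≤ e (1 + n² / (|A| |Aᶜ|))`, and
`|A| |Aᶜ| ≤ n² / 4` gives `q |A| |Aᶜ| ≤ 5e / 4`.
-/

/-- A graph `G` is `p`-cut-dense if for every partition of its vertex set into two parts
`A, B`, the number of edges between `A` and `B` is at least `p·|A|·|B|`. -/
def CutDense {V : Type} (G : SimpleGraph V) (p : ℝ) : Prop :=
  ∀ A B : Set V, A ∪ B = Set.univ → Disjoint A B →
    p * (A.ncard : ℝ) * (B.ncard : ℝ) ≤
      (Set.ncard {p : V × V | p.1 ∈ A ∧ p.2 ∈ B ∧ G.Adj p.1 p.2} : ℝ)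

open Finset SimpleGraph

namespace SimpleGraph

variable {V : Type*} {G : SimpleGraph V} [DecidableRel G.Adj]

theorem card_interedges_comm (s t : Finset V) : #(G.interedges s t) = #(G.interedges t s) :=
  have := G.symm
  Rel.card_interedges_comm s t

variable [Fintype V] [DecidableEq V]

theorem Walk.exists_mem_edges_interedges_or_end {a b : V} (w : G.Walk a b) (hw : ¬w.Nil)
    (A : Finset V) :
    ∃ x y, s(x, y) ∈ w.edges ∧
      ((x, y) ∈ G.interedges A Aᶜ ∨ x = a ∧ a ∉ A ∨ x = b ∧ b ∈ A) := by
  by_cases ha : a ∈ A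
  · by_cases hb : b ∈ A
    · exact ⟨b, w.penultimate, Sym2.eq_swap ▸ w.mk_penultimate_end_mem_edges hw,
        .inr (.inr ⟨rfl, hb⟩)⟩
    · obtain ⟨d, hd, hfst, hsnd⟩ := w.exists_boundary_dart (A : Set V) ha hb
      exact ⟨d.fst, d.snd, List.mem_map_of_mem (f := Dart.edge) hd,
        .inl (G.mk_mem_interedges_iff.2 ⟨hfst, by simpa using hsnd, d.adj⟩)⟩
  · exact ⟨a, w.snd, w.mk_start_snd_mem_edges hw, .inr (.inl ⟨rfl, ha⟩)⟩

theorem card_interedges_eq_sum_card_neighborFinset_inter (s t : Finset V) :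
    #(G.interedges s t) = ∑ a ∈ s, #(G.neighborFinset a ∩ t) := by
  rw [interedges, Rel.interedges_eq_biUnion, card_biUnion]
  · refine sum_congr rfl fun a _ => ?_
    rw [card_map]
    congr 1
    ext b
    simp only [mem_filter, mem_inter, mem_neighborFinset]
    exact and_comm
  · intro a _ a' _ haa'
    simp only [Function.onFun, Finset.disjoint_left, mem_map, Function.Embedding.coeFn_mk]
    rintro _ ⟨b, -, rfl⟩ ⟨b', -, h⟩
    exact haa' (congrArg Prod.fst h).symm

theorem exists_card_mul_card_le_card_interedges {s : Finset V} (hs : s.Nonempty) (t : Finset V) :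
    ∃ a ∈ s, #s * #(G.neighborFinset a ∩ t) ≤ #(G.interedges s t) := by
  obtain ⟨a, ha, hmin⟩ := s.exists_min_image (fun a => #(G.neighborFinset a ∩ t)) hs
  refine ⟨a, ha, ?_⟩
  rw [card_interedges_eq_sum_card_neighborFinset_inter]
  simpa using s.card_nsmul_le_sum _ _ hmin

theorem card_le_card_interedges_add_of_pairwise_disjoint_edges {ι : Type*} [Fintype ι]
    (P : ι → (a : V) × (b : V) × G.Walk a b) (S T A : Finset V)
    (hP : ∀ i, ¬(P i).2.2.Nil ∧ (P i).1 ∈ S ∧ (P i).2.1 ∈ T)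
    (hdisj : Pairwise fun i j => List.Disjoint (P i).2.2.edges (P j).2.2.edges) :
    Fintype.card ι ≤ #(G.interedges A Aᶜ) + (#(S ∩ Aᶜ) + #(T ∩ A)) * Fintype.card V := by
  choose x y hxy hcase using fun i => (P i).2.2.exists_mem_edges_interedges_or_end (hP i).1 A
  have hmaps : ∀ i ∈ (univ : Finset ι),
      (x i, y i) ∈ G.interedges A Aᶜ ∪ (S ∩ Aᶜ ∪ T ∩ A) ×ˢ univ := by
    intro i _
    rcases hcase i with h | ⟨hx, h⟩ | ⟨hx, h⟩
    · exact mem_union_left _ h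
    · simp [hx, h, (hP i).2.1]
    · simp [hx, h, (hP i).2.2]
  have hinj : Set.InjOn (fun i => (x i, y i)) (univ : Finset ι) := by
    intro i _ j _ hij
    by_contra hne
    obtain ⟨hx, hy⟩ := Prod.mk.inj hij
    exact hdisj hne (hxy i) (hx ▸ hy ▸ hxy j)
  calc Fintype.card ι
      ≤ #(G.interedges A Aᶜ ∪ (S ∩ Aᶜ ∪ T ∩ A) ×ˢ univ) := card_le_card_of_injOn _ hmaps hinj
    _ ≤ #(G.interedges A Aᶜ) + #(S ∩ Aᶜ ∪ T ∩ A) * Fintype.card V := by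
      grw [card_union_le, card_product, card_univ]
    _ ≤ _ := by grw [card_union_le]

end SimpleGraph

theorem cutDense_of_forall_finset {V : Type} [Fintype V] [DecidableEq V] {G : SimpleGraph V}
    [DecidableRel G.Adj] {p : ℝ}
    (h : ∀ A : Finset V, p * #A * #Aᶜ ≤ #(G.interedges A Aᶜ)) : CutDense G p := by
  classical
  intro A B hAB hdisj
  obtain rfl : Aᶜ = B := IsCompl.compl_eq ⟨hdisj, codisjoint_iff.2 hAB⟩
  have hedges : {p : V × V | p.1 ∈ A ∧ p.2 ∈ Aᶜ ∧ G.Adj p.1 p.2} =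
      G.interedges A.toFinset A.toFinsetᶜ := by
    ext; simp [mem_interedges_iff]
  rw [hedges, Set.ncard_coe_finset, Set.ncard_eq_toFinset_card' A, Set.ncard_eq_toFinset_card' Aᶜ,
    Set.toFinset_compl]
  exact h A.toFinset

theorem four_mul_mul_le_five_mul {q : ℝ} {a b e du dv m : ℕ} (hab : 0 < a + b)
    (hm : q * ((a + b : ℕ) : ℝ) ^ 2 ≤ m) (hcount : m ≤ e + (du + dv) * (a + b))
    (hu : a * du ≤ e) (hv : b * dv ≤ e) : 4 * q * a * b ≤ 5 * e := by
  have hcount' : q * (a + b) ^ 2 ≤ e + (du + dv) * (a + b) := by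
    push_cast at hm
    exact hm.trans (by exact_mod_cast hcount)
  have hu' : (a : ℝ) * du ≤ e := by exact_mod_cast hu
  have hv' : (b : ℝ) * dv ≤ e := by exact_mod_cast hv
  have hab' : (0 : ℝ) < a + b := by exact_mod_cast hab
  have key : q * (a + b) ^ 2 * (a * b) ≤ 5 / 4 * e * (a + b) ^ 2 := by
    calc q * (a + b) ^ 2 * (a * b)
        ≤ (e + (du + dv) * (a + b)) * (a * b) := by gcongr
      _ = e * (a * b) + (a * du) * (b * (a + b)) + (b * dv) * (a * (a + b)) := by ring
      _ ≤ e * (a * b) + e * (b * (a + b)) + e * (a * (a + b)) := by gcongr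
      _ ≤ 5 / 4 * e * (a + b) ^ 2 := by nlinarith [sq_nonneg ((a : ℝ) - b)]
  nlinarith [pow_pos hab' 2]

theorem stmt8_general {V : Type} [Fintype V] (G : SimpleGraph V) (q : ℝ)
    (hpaths : ∀ u v : V, ∃ (m : ℕ) (P : Fin m → (a : V) × (b : V) × G.Walk a b),
      q * (Fintype.card V : ℝ) ^ 2 ≤ (m : ℝ) ∧
      (∀ i : Fin m, ((P i).2.2).IsPath ∧ 1 ≤ ((P i).2.2).length ∧
        (P i).1 ∈ G.neighborSet u ∧ (P i).2.1 ∈ G.neighborSet v) ∧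
      (∀ i j : Fin m, i ≠ j → List.Disjoint ((P i).2.2).edges ((P j).2.2).edges)) :
    CutDense G (q / 10) := by
  classical
  refine cutDense_of_forall_finset fun A => ?_
  rcases A.eq_empty_or_nonempty with rfl | hA
  · simp
  rcases Aᶜ.eq_empty_or_nonempty with hB | hB
  · simp [hB]
  obtain ⟨u, -, hu⟩ := exists_card_mul_card_le_card_interedges (G := G) hA Aᶜ
  obtain ⟨v, -, hv⟩ := exists_card_mul_card_le_card_interedges (G := G) hB A
  rw [card_interedges_comm] at hv
  obtain ⟨m, P, hm, hP, hdisj⟩ := hpaths u v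
  have hcount := card_le_card_interedges_add_of_pairwise_disjoint_edges P
    (G.neighborFinset u) (G.neighborFinset v) A
    (fun i => ⟨Walk.not_nil_iff_lt_length.2 (hP i).2.1, by simpa using (hP i).2.2.1,
      by simpa using (hP i).2.2.2⟩) hdisj
  rw [Fintype.card_fin, ← card_add_card_compl A] at hcount
  rw [← card_add_card_compl A] at hm
  have := four_mul_mul_le_five_mul (by positivity) hm hcount hu hv
  linarith [Nat.cast_nonneg (α := ℝ) #(G.interedges A Aᶜ)]

/-- If `G` has `n ≥ 10` vertices and for every pair of vertices `u, v` there
exist at least `q·n²` pairwise edge-disjoint paths of length at least `1` from `N(u)` to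
`N(v)`, then `G` is `(q/10)`-cut-dense. -/
theorem stmt8 {V : Type} [Fintype V] (G : SimpleGraph V) (q : ℝ)
    (hn : 10 ≤ Fintype.card V)
    (hpaths : ∀ u v : V, ∃ (m : ℕ) (P : Fin m → (a : V) × (b : V) × G.Walk a b),
      q * (Fintype.card V : ℝ) ^ 2 ≤ (m : ℝ) ∧
      (∀ i : Fin m, ((P i).2.2).IsPath ∧ 1 ≤ ((P i).2.2).length ∧
        (P i).1 ∈ G.neighborSet u ∧ (P i).2.1 ∈ G.neighborSet v) ∧
      (∀ i j : Fin m, i ≠ j → List.Disjoint ((P i).2.2).edges ((P j).2.2).edges)) :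
    CutDense G (q / 10) :=
  stmt8_general G q hpaths
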